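/- Let G be a Polish abelian group with the division closure property and let 𝐀 = (A_(ℓ), η_(ℓ+1,ℓ))_{ℓ∈ω} be an inductive sequence of cochain complexes of finitely generated free abelian groups, with G-dual tower 𝐀* = (A_(ℓ)*, η_(ℓ+1,ℓ)*). Then for each n ∈ ℤ the pairing defined by ⟨z, a e_ℓ⟩ = z_ℓ(a) for a ∈ A_(ℓ)^n and ⟨z, b e_{ℓ,ℓ+1}⟩ = z_{ℓ,ℓ+1}(b) for b ∈ A_(ℓ)^{n+1}, where z = (z_m, z_{m0,m1}) ∈ (holim 𝐀*)_n, gives a topological group isomorphism (holim 𝐀*)_n ≅ Hom((hocolim 𝐀)^n, G), and these isomorphisms intertwine the differentials of holim 𝐀* with the duals (precompositions) of the codifferentials of hocolim 𝐀; that is, holim(𝐀*) is isomorphic as a Polish chain complex to the G-dual (hocolim 𝐀)*. -/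

import Mathlib

/-!
A homomorphism out of a direct sum is the family of its restrictions to the summands, so
`Hom((hocolim 𝐀)^n, G)` is the set of families `(z_ℓ, z_{ℓ,ℓ+1})` of homomorphisms.  On the
holim side the coherence condition forces `z_{ℓ,ℓ} = 0` and telescopes
`z_{ℓ,ℓ+k} = ∑_{j<k} z_{ℓ+j,ℓ+j+1} ∘ η_(ℓ+j,ℓ)`, so an element of `(holim 𝐀*)_n` is freely
determined by the same data; the pairing is this identification.  Both topologies are
pointwise and every coordinate on either side is a finite sum of coordinates on the other,
so the bijection is a homeomorphism.  The differentials are compared on generators, where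
the only point is `(-1)^(n+1) = -(-1)^n`.
-/

/- `A ℓ n` is the degree-`n` group of `A_(ℓ)`.  In `hocolimGrp A n` the first summand carries
the `e_{ℓ,ℓ+1}` part and the second the `e_ℓ` part.  An element `(z, z2)` of
`holimDualSub A η G N` has `z2 ℓ k = z_{ℓ,ℓ+k}`. -/

def sgn (n : ℤ) : ℤ := if Even n then 1 else -1

/-- The composite bonding map `η_(ℓ+k,ℓ)`. -/
def etaComp {A : ℕ → ℤ → Type*} [∀ ℓ n, AddCommGroup (A ℓ n)]
    (η : ∀ (ℓ : ℕ) (n : ℤ), A ℓ n →+ A (ℓ + 1) n) (n : ℤ) :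
    ∀ ℓ k : ℕ, A ℓ n →+ A (ℓ + k) n
  | _, 0 => AddMonoidHom.id _
  | ℓ, (k + 1) => (η (ℓ + k) n).comp (etaComp η n ℓ k)

abbrev hocolimGrp (A : ℕ → ℤ → Type*) [∀ ℓ n, AddCommGroup (A ℓ n)] (n : ℤ) : Type _ :=
  (DirectSum ℕ fun m => A m (n + 1)) × (DirectSum ℕ fun k => A k n)

noncomputable def hocolimD (A : ℕ → ℤ → Type*) [∀ ℓ n, AddCommGroup (A ℓ n)]
    (δ : ∀ (ℓ : ℕ) (n : ℤ), A ℓ n →+ A ℓ (n + 1))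
    (η : ∀ (ℓ : ℕ) (n : ℤ), A ℓ n →+ A (ℓ + 1) n) (n : ℤ) :
    hocolimGrp A n →+ hocolimGrp A (n + 1) :=
  ((DirectSum.toAddMonoid fun ℓ : ℕ =>
      (((DirectSum.of (fun m : ℕ => A m (n + 1 + 1)) ℓ).comp (δ ℓ (n + 1))).prod
        (sgn n • ((DirectSum.of (fun k : ℕ => A k (n + 1)) ℓ) -
          (DirectSum.of (fun k : ℕ => A k (n + 1)) (ℓ + 1)).comp (η ℓ (n + 1)))))).comp
    (AddMonoidHom.fst _ _)) +
  ((DirectSum.toAddMonoid fun k : ℕ =>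
      ((0 : A k n →+ DirectSum ℕ fun m => A m (n + 1 + 1)).prod
        ((DirectSum.of (fun k' : ℕ => A k' (n + 1)) k).comp (δ k n)))).comp
    (AddMonoidHom.snd _ _))

def homSet (X G : Type*) [AddCommGroup X] [AddCommGroup G] : AddSubgroup (X → G) where
  carrier := {f | ∀ x y : X, f (x + y) = f x + f y}
  zero_mem' := fun _ _ => by simp
  add_mem' := by
    intro f g hf hg x y
    simp only [Pi.add_apply, hf x y, hg x y]
    abel
  neg_mem' := by
    intro f hf x y
    simp only [Pi.neg_apply, hf x y]
    abel

def holimDualSub (A : ℕ → ℤ → Type*) [∀ ℓ n, AddCommGroup (A ℓ n)]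
    (η : ∀ (ℓ : ℕ) (n : ℤ), A ℓ n →+ A (ℓ + 1) n) (G : Type*) [AddCommGroup G] (N : ℤ) :
    AddSubgroup ((∀ ℓ : ℕ, A ℓ N → G) × (∀ (ℓ k : ℕ), A ℓ (N + 1) → G)) where
  carrier := {z |
    (∀ (ℓ : ℕ) (a b : A ℓ N), z.1 ℓ (a + b) = z.1 ℓ a + z.1 ℓ b) ∧
    (∀ (ℓ k : ℕ) (a b : A ℓ (N + 1)), z.2 ℓ k (a + b) = z.2 ℓ k a + z.2 ℓ k b) ∧
    ∀ (ℓ k l : ℕ) (a : A ℓ (N + 1)),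
      z.2 ℓ k a + z.2 (ℓ + k) l (etaComp η (N + 1) ℓ k a) = z.2 ℓ (k + l) a}
  zero_mem' := ⟨fun _ _ _ => by simp, fun _ _ _ _ => by simp, fun _ _ _ _ => by simp⟩
  add_mem' := by
    rintro z w ⟨z1, z2, z3⟩ ⟨w1, w2, w3⟩
    refine ⟨fun ℓ a b => ?_, fun ℓ k a b => ?_, fun ℓ k l a => ?_⟩
    · show z.1 ℓ (a + b) + w.1 ℓ (a + b) = _
      rw [z1, w1]; show _ = z.1 ℓ a + w.1 ℓ a + (z.1 ℓ b + w.1 ℓ b); abel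
    · show z.2 ℓ k (a + b) + w.2 ℓ k (a + b) = _
      rw [z2, w2]; show _ = z.2 ℓ k a + w.2 ℓ k a + (z.2 ℓ k b + w.2 ℓ k b); abel
    · show z.2 ℓ k a + w.2 ℓ k a +
          (z.2 (ℓ + k) l (etaComp η (N + 1) ℓ k a) +
            w.2 (ℓ + k) l (etaComp η (N + 1) ℓ k a)) =
          z.2 ℓ (k + l) a + w.2 ℓ (k + l) a
      calc z.2 ℓ k a + w.2 ℓ k a +
            (z.2 (ℓ + k) l (etaComp η (N + 1) ℓ k a) +
              w.2 (ℓ + k) l (etaComp η (N + 1) ℓ k a))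
          = (z.2 ℓ k a + z.2 (ℓ + k) l (etaComp η (N + 1) ℓ k a)) +
            (w.2 ℓ k a + w.2 (ℓ + k) l (etaComp η (N + 1) ℓ k a)) := by abel
        _ = z.2 ℓ (k + l) a + w.2 ℓ (k + l) a := by rw [z3, w3]
  neg_mem' := by
    rintro z ⟨z1, z2, z3⟩
    refine ⟨fun ℓ a b => ?_, fun ℓ k a b => ?_, fun ℓ k l a => ?_⟩
    · show -z.1 ℓ (a + b) = -z.1 ℓ a + -z.1 ℓ b
      rw [z1]; abel
    · show -z.2 ℓ k (a + b) = -z.2 ℓ k a + -z.2 ℓ k b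
      rw [z2]; abel
    · show -z.2 ℓ k a + -z.2 (ℓ + k) l (etaComp η (N + 1) ℓ k a) = -z.2 ℓ (k + l) a
      rw [← neg_add, z3]

def dHolimDual (A : ℕ → ℤ → Type*) [∀ ℓ n, AddCommGroup (A ℓ n)]
    (δ : ∀ (ℓ : ℕ) (n : ℤ), A ℓ n →+ A ℓ (n + 1))
    (η : ∀ (ℓ : ℕ) (n : ℤ), A ℓ n →+ A (ℓ + 1) n) (G : Type*) [AddCommGroup G] (N : ℤ)
    (zz : (∀ ℓ : ℕ, A ℓ (N + 1) → G) × (∀ (ℓ k : ℕ), A ℓ (N + 1 + 1) → G)) :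
    (∀ ℓ : ℕ, A ℓ N → G) × (∀ (ℓ k : ℕ), A ℓ (N + 1) → G) :=
  (fun ℓ a => zz.1 ℓ (δ ℓ N a),
   fun ℓ k a => zz.2 ℓ k (δ ℓ (N + 1) a) +
     sgn (N + 1) • (zz.1 (ℓ + k) (etaComp η (N + 1) ℓ k a) - zz.1 ℓ a))

lemma sgn_add_one (n : ℤ) : sgn (n + 1) = -sgn n := by
  by_cases h : Even n <;> simp [sgn, h]

lemma prod_directSum_addHom_ext {ι κ M : Type*} [DecidableEq ι] [DecidableEq κ]
    {β : ι → Type*} {γ : κ → Type*} [∀ i, AddCommMonoid (β i)] [∀ k, AddCommMonoid (γ k)]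
    [AddCommMonoid M] {f g : DirectSum ι β × DirectSum κ γ →+ M}
    (h₁ : ∀ i b, f (DirectSum.of β i b, 0) = g (DirectSum.of β i b, 0))
    (h₂ : ∀ k c, f (0, DirectSum.of γ k c) = g (0, DirectSum.of γ k c)) : f = g := by
  rw [← AddMonoidHom.coprod_unique f, ← AddMonoidHom.coprod_unique g]
  congr 1 <;> ext i b
  · exact h₁ i b
  · exact h₂ i b

lemma continuous_toAddMonoid_apply {X ι M : Type*} [TopologicalSpace X] [DecidableEq ι]
    {β : ι → Type*} [∀ i, AddCommMonoid (β i)] [AddCommMonoid M] [TopologicalSpace M]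
    [ContinuousAdd M] {φ : X → ∀ i, β i →+ M} (hφ : ∀ i b, Continuous fun x => φ x i b)
    (y : DirectSum ι β) : Continuous fun x => DirectSum.toAddMonoid (φ x) y := by
  induction y using DirectSum.induction_on with
  | zero => simpa using continuous_const
  | of i b => simpa using hφ i b
  | add y y' hy hy' => simp only [map_add]; exact hy.add hy'

section Pairing

variable {A : ℕ → ℤ → Type*} [∀ ℓ n, AddCommGroup (A ℓ n)]
  (η : ∀ (ℓ : ℕ) (n : ℤ), A ℓ n →+ A (ℓ + 1) n)

@[simp]
lemma etaComp_zero (n : ℤ) (ℓ : ℕ) : etaComp η n ℓ 0 = AddMonoidHom.id _ := rfl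

@[simp]
lemma etaComp_one (n : ℤ) (ℓ : ℕ) : etaComp η n ℓ 1 = η ℓ n := rfl

lemma apply_etaComp_etaComp {X : Sort*} {n : ℤ} (ℓ k : ℕ) (a : A ℓ n) (l : ℕ) :
    ∀ g : ∀ m, A m n → X,
      g (ℓ + k + l) (etaComp η n (ℓ + k) l (etaComp η n ℓ k a)) =
        g (ℓ + (k + l)) (etaComp η n ℓ (k + l) a) := by
  induction l with
  | zero => exact fun _ => rfl
  | succ l ih => exact fun g => ih fun m x => g (m + 1) (η m n x)

lemma etaComp_delta (δ : ∀ (ℓ : ℕ) (n : ℤ), A ℓ n →+ A ℓ (n + 1))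
    (hηδ : ∀ (ℓ : ℕ) (n : ℤ) (x : A ℓ n), η ℓ (n + 1) (δ ℓ n x) = δ (ℓ + 1) n (η ℓ n x))
    (n : ℤ) (ℓ k : ℕ) (a : A ℓ n) :
    etaComp η (n + 1) ℓ k (δ ℓ n a) = δ (ℓ + k) n (etaComp η n ℓ k a) := by
  induction k with
  | zero => rfl
  | succ k ih => exact (congrArg (η (ℓ + k) (n + 1)) ih).trans (hηδ _ _ _)

lemma hocolimD_inl_of (δ : ∀ (ℓ : ℕ) (n : ℤ), A ℓ n →+ A ℓ (n + 1)) (n : ℤ) (ℓ : ℕ)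
    (b : A ℓ (n + 1)) :
    hocolimD A δ η n (DirectSum.of (fun i => A i (n + 1)) ℓ b, 0) =
      (DirectSum.of (fun i => A i (n + 1 + 1)) ℓ (δ ℓ (n + 1) b), 0) +
        sgn n • ((0, DirectSum.of (fun i => A i (n + 1)) ℓ b) -
          (0, DirectSum.of (fun i => A i (n + 1)) (ℓ + 1) (η ℓ (n + 1) b))) := by
  simp [hocolimD]

lemma hocolimD_inr_of (δ : ∀ (ℓ : ℕ) (n : ℤ), A ℓ n →+ A ℓ (n + 1)) (n : ℤ) (k : ℕ)
    (a : A k n) :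
    hocolimD A δ η n (0, DirectSum.of (fun i => A i n) k a) =
      (0, DirectSum.of (fun i => A i (n + 1)) k (δ k n a)) := by
  simp [hocolimD]

variable {G : Type*} [AddCommGroup G]

lemma snd_eq_sum_of_mem_holimDualSub {N : ℤ}
    {z : (∀ ℓ : ℕ, A ℓ N → G) × (∀ ℓ : ℕ, ℕ → A ℓ (N + 1) → G)}
    (hz : z ∈ holimDualSub A η G N) (ℓ k : ℕ) (b : A ℓ (N + 1)) :
    z.2 ℓ k b = ∑ j ∈ Finset.range k, z.2 (ℓ + j) 1 (etaComp η (N + 1) ℓ j b) := by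
  induction k with
  | zero => simpa using hz.2.2 ℓ 0 0 b
  | succ k ih => rw [Finset.sum_range_succ, ← ih, hz.2.2 ℓ k 1 b]

noncomputable def pairing (N : ℤ) (z : holimDualSub A η G N) : hocolimGrp A N →+ G :=
  (DirectSum.toAddMonoid fun ℓ => AddMonoidHom.mk' (z.1.2 ℓ 1) (z.2.2.1 ℓ 1)).coprod
    (DirectSum.toAddMonoid fun k => AddMonoidHom.mk' (z.1.1 k) (z.2.1 k))

@[simp]
lemma pairing_inl_of (N : ℤ) (z : holimDualSub A η G N) (ℓ : ℕ) (b : A ℓ (N + 1)) :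
    pairing η N z (DirectSum.of (fun i => A i (N + 1)) ℓ b, 0) = z.1.2 ℓ 1 b := by
  simp [pairing]

@[simp]
lemma pairing_inr_of (N : ℤ) (z : holimDualSub A η G N) (k : ℕ) (a : A k N) :
    pairing η N z (0, DirectSum.of (fun i => A i N) k a) = z.1.1 k a := by
  simp [pairing]

lemma pairing_add (N : ℤ) (z w : holimDualSub A η G N) :
    pairing η N (z + w) = pairing η N z + pairing η N w :=
  prod_directSum_addHom_ext (fun _ _ => by simp) (fun _ _ => by simp)

def pairingInvFun (N : ℤ) (f : hocolimGrp A N → G) :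
    (∀ ℓ : ℕ, A ℓ N → G) × (∀ ℓ : ℕ, ℕ → A ℓ (N + 1) → G) :=
  (fun k a => f (0, DirectSum.of (fun i => A i N) k a),
   fun ℓ k b => ∑ j ∈ Finset.range k,
     f (DirectSum.of (fun i => A i (N + 1)) (ℓ + j) (etaComp η (N + 1) ℓ j b), 0))

lemma pairingInvFun_mem (N : ℤ) {f : hocolimGrp A N → G}
    (hf : f ∈ homSet (hocolimGrp A N) G) :
    pairingInvFun η N f ∈ holimDualSub A η G N := by
  refine ⟨fun ℓ a b => ?_, fun ℓ k a b => ?_, fun ℓ k l b => ?_⟩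
  · simpa [pairingInvFun] using hf (0, DirectSum.of _ ℓ a) (0, DirectSum.of _ ℓ b)
  · simp only [pairingInvFun, ← Finset.sum_add_distrib]
    refine Finset.sum_congr rfl fun j _ => ?_
    simpa using hf (DirectSum.of _ (ℓ + j) (etaComp η (N + 1) ℓ j a), 0)
      (DirectSum.of _ (ℓ + j) (etaComp η (N + 1) ℓ j b), 0)
  · simp only [pairingInvFun, Finset.sum_range_add]
    congr 1
    refine Finset.sum_congr rfl fun j _ => ?_
    exact apply_etaComp_etaComp η ℓ k b j fun m x => f (DirectSum.of _ m x, 0)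

lemma pairingInvFun_pairing (N : ℤ) (z : holimDualSub A η G N) :
    pairingInvFun η N (pairing η N z) = z.1 := by
  refine Prod.ext (funext fun k => funext fun a => pairing_inr_of η N z k a) ?_
  funext ℓ k b
  simp only [pairingInvFun, pairing_inl_of]
  exact (snd_eq_sum_of_mem_holimDualSub η z.2 ℓ k b).symm

lemma pairing_pairingInvFun (N : ℤ) {f : hocolimGrp A N → G}
    (hf : f ∈ homSet (hocolimGrp A N) G) :
    ⇑(pairing η N ⟨pairingInvFun η N f, pairingInvFun_mem η N hf⟩) = f := by
  have h : pairing η N ⟨pairingInvFun η N f, pairingInvFun_mem η N hf⟩ =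
      AddMonoidHom.mk' f hf :=
    prod_directSum_addHom_ext (fun _ _ => by simp [pairingInvFun]; rfl)
      (fun _ _ => by simp [pairingInvFun]; rfl)
  rw [h]
  rfl

lemma dHolimDual_mem (δ : ∀ (ℓ : ℕ) (n : ℤ), A ℓ n →+ A ℓ (n + 1))
    (hηδ : ∀ (ℓ : ℕ) (n : ℤ) (x : A ℓ n), η ℓ (n + 1) (δ ℓ n x) = δ (ℓ + 1) n (η ℓ n x))
    (N : ℤ) {z : (∀ ℓ : ℕ, A ℓ (N + 1) → G) × (∀ ℓ : ℕ, ℕ → A ℓ (N + 1 + 1) → G)}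
    (hz : z ∈ holimDualSub A η G (N + 1)) : dHolimDual A δ η G N z ∈ holimDualSub A η G N := by
  obtain ⟨hadd₁, hadd₂, hcoh⟩ := hz
  refine ⟨fun ℓ a b => ?_, fun ℓ k a b => ?_, fun ℓ k l a => ?_⟩
  · simp only [dHolimDual, map_add, hadd₁]
  · simp only [dHolimDual, map_add, hadd₁, hadd₂, smul_sub, smul_add]
    abel
  · simp only [dHolimDual]
    rw [← etaComp_delta η δ hηδ, apply_etaComp_etaComp η ℓ k a l z.1, ← hcoh ℓ k l]
    simp only [smul_sub]
    abel

lemma pairing_dHolimDual (δ : ∀ (ℓ : ℕ) (n : ℤ), A ℓ n →+ A ℓ (n + 1)) (N : ℤ)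
    (z : holimDualSub A η G (N + 1)) (hz : dHolimDual A δ η G N z.1 ∈ holimDualSub A η G N) :
    pairing η N ⟨dHolimDual A δ η G N z.1, hz⟩ =
      (pairing η (N + 1) z).comp (hocolimD A δ η N) := by
  refine prod_directSum_addHom_ext (fun ℓ b => ?_) (fun k a => ?_)
  · simp only [AddMonoidHom.comp_apply, hocolimD_inl_of, map_add, map_zsmul, map_sub,
      pairing_inl_of, pairing_inr_of, etaComp_one, dHolimDual]
    rw [sgn_add_one, neg_smul, ← smul_neg, neg_sub]
  · simp only [AddMonoidHom.comp_apply, hocolimD_inr_of, pairing_inr_of]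
    rfl

variable [TopologicalSpace G] [ContinuousAdd G]

lemma continuous_pairing_apply (N : ℤ) (x : hocolimGrp A N) :
    Continuous fun z : holimDualSub A η G N => pairing η N z x := by
  have hfst {ℓ : ℕ} (b : A ℓ N) : Continuous fun z : holimDualSub A η G N => z.1.1 ℓ b :=
    (continuous_apply b).comp <| (continuous_apply ℓ).comp <|
      continuous_fst.comp continuous_subtype_val
  have hsnd {ℓ : ℕ} (b : A ℓ (N + 1)) :
      Continuous fun z : holimDualSub A η G N => z.1.2 ℓ 1 b :=
    (continuous_apply b).comp <| (continuous_apply 1).comp <| (continuous_apply ℓ).comp <|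
      continuous_snd.comp continuous_subtype_val
  simp only [pairing, AddMonoidHom.coprod_apply]
  exact (continuous_toAddMonoid_apply (fun _ b => hsnd b) x.1).add
    (continuous_toAddMonoid_apply (fun _ b => hfst b) x.2)

noncomputable def pairingHomeomorph (N : ℤ) :
    holimDualSub A η G N ≃ₜ homSet (hocolimGrp A N) G where
  toFun z := ⟨pairing η N z, fun x y => map_add _ x y⟩
  invFun f := ⟨pairingInvFun η N f, pairingInvFun_mem η N f.2⟩
  left_inv z := Subtype.ext (pairingInvFun_pairing η N z)
  right_inv f := Subtype.ext (pairing_pairingInvFun η N f.2)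
  continuous_toFun := (continuous_pi (continuous_pairing_apply η N)).subtype_mk _
  continuous_invFun := by
    have heval (x : hocolimGrp A N) :
        Continuous fun f : homSet (hocolimGrp A N) G => f.1 x :=
      (continuous_apply x).comp continuous_subtype_val
    refine Continuous.subtype_mk (Continuous.prodMk ?_ ?_) _
    · exact continuous_pi fun _ => continuous_pi fun _ => heval _
    · exact continuous_pi fun _ => continuous_pi fun _ => continuous_pi fun _ =>
        continuous_finsetSum _ fun _ _ => heval _

end Pairing

theorem holim_of_dual_tower_is_dual_of_hocolim_general
    {G : Type*} [AddCommGroup G] [TopologicalSpace G] [IsTopologicalAddGroup G]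
    (A : ℕ → ℤ → Type*) [∀ ℓ n, AddCommGroup (A ℓ n)]
    (δ : ∀ (ℓ : ℕ) (n : ℤ), A ℓ n →+ A ℓ (n + 1))
    (η : ∀ (ℓ : ℕ) (n : ℤ), A ℓ n →+ A (ℓ + 1) n)
    (hηchain : ∀ (ℓ : ℕ) (n : ℤ) (x : A ℓ n),
      η ℓ (n + 1) (δ ℓ n x) = δ (ℓ + 1) n (η ℓ n x)) :
    -- the differential of holim 𝐀* preserves the holim subgroups
    (∀ (N : ℤ) (zz : (∀ ℓ : ℕ, A ℓ (N + 1) → G) × (∀ (ℓ k : ℕ), A ℓ (N + 1 + 1) → G)),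
      zz ∈ holimDualSub A η G (N + 1) → dHolimDual A δ η G N zz ∈ holimDualSub A η G N) ∧
    -- the pairing gives degreewise topological group isomorphisms, intertwining the
    -- differential of holim 𝐀* with the dual of the codifferential of hocolim 𝐀
    ∃ e : ∀ N : ℤ, ↥(holimDualSub A η G N) ≃ₜ ↥(homSet (hocolimGrp A N) G),
      (∀ (N : ℤ) (x y : ↥(holimDualSub A η G N)), e N (x + y) = e N x + e N y) ∧
      -- ⟨z, b e_{ℓ,ℓ+1}⟩ = z_{ℓ,ℓ+1}(b)
      (∀ (N : ℤ) (zz : ↥(holimDualSub A η G N)) (ℓ : ℕ) (b : A ℓ (N + 1)),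
        (e N zz).1 (DirectSum.of (fun m : ℕ => A m (N + 1)) ℓ b, 0) = zz.1.2 ℓ 1 b) ∧
      -- ⟨z, a e_ℓ⟩ = z_ℓ(a)
      (∀ (N : ℤ) (zz : ↥(holimDualSub A η G N)) (k : ℕ) (a : A k N),
        (e N zz).1 (0, DirectSum.of (fun k' : ℕ => A k' N) k a) = zz.1.1 k a) ∧
      -- intertwining of the differentials
      (∀ (N : ℤ) (zz : ↥(holimDualSub A η G (N + 1)))
        (hm : dHolimDual A δ η G N zz.1 ∈ holimDualSub A η G N),
        ((e N ⟨dHolimDual A δ η G N zz.1, hm⟩ : ↥(homSet (hocolimGrp A N) G)) :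
            hocolimGrp A N → G) =
          fun x => (e (N + 1) zz).1 (hocolimD A δ η N x)) :=
  ⟨fun N _ hz => dHolimDual_mem η δ hηchain N hz, pairingHomeomorph η,
    fun N z w => Subtype.ext (congrArg DFunLike.coe (pairing_add η N z w)),
    pairing_inl_of η, pairing_inr_of η,
    fun N z hz => congrArg DFunLike.coe (pairing_dHolimDual η δ N z hz)⟩

theorem holim_of_dual_tower_is_dual_of_hocolim
    {G : Type*} [AddCommGroup G] [TopologicalSpace G] [IsTopologicalAddGroup G]
    [PolishSpace G]
    (hdcp : ∀ k : ℕ, 0 < k → IsClosed {g : G | ∃ x : G, k • x = g})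
    (A : ℕ → ℤ → Type*) [∀ ℓ n, AddCommGroup (A ℓ n)]
    [∀ ℓ n, Module.Free ℤ (A ℓ n)] [∀ ℓ n, Module.Finite ℤ (A ℓ n)]
    (δ : ∀ (ℓ : ℕ) (n : ℤ), A ℓ n →+ A ℓ (n + 1))
    (hδδ : ∀ (ℓ : ℕ) (n : ℤ) (x : A ℓ n), δ ℓ (n + 1) (δ ℓ n x) = 0)
    (η : ∀ (ℓ : ℕ) (n : ℤ), A ℓ n →+ A (ℓ + 1) n)
    (hηchain : ∀ (ℓ : ℕ) (n : ℤ) (x : A ℓ n),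
      η ℓ (n + 1) (δ ℓ n x) = δ (ℓ + 1) n (η ℓ n x)) :
    -- the differential of holim 𝐀* preserves the holim subgroups
    (∀ (N : ℤ) (zz : (∀ ℓ : ℕ, A ℓ (N + 1) → G) × (∀ (ℓ k : ℕ), A ℓ (N + 1 + 1) → G)),
      zz ∈ holimDualSub A η G (N + 1) → dHolimDual A δ η G N zz ∈ holimDualSub A η G N) ∧
    -- the pairing gives degreewise topological group isomorphisms, intertwining the
    -- differential of holim 𝐀* with the dual of the codifferential of hocolim 𝐀
    ∃ e : ∀ N : ℤ, ↥(holimDualSub A η G N) ≃ₜ ↥(homSet (hocolimGrp A N) G),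
      (∀ (N : ℤ) (x y : ↥(holimDualSub A η G N)), e N (x + y) = e N x + e N y) ∧
      -- ⟨z, b e_{ℓ,ℓ+1}⟩ = z_{ℓ,ℓ+1}(b)
      (∀ (N : ℤ) (zz : ↥(holimDualSub A η G N)) (ℓ : ℕ) (b : A ℓ (N + 1)),
        (e N zz).1 (DirectSum.of (fun m : ℕ => A m (N + 1)) ℓ b, 0) = zz.1.2 ℓ 1 b) ∧
      -- ⟨z, a e_ℓ⟩ = z_ℓ(a)
      (∀ (N : ℤ) (zz : ↥(holimDualSub A η G N)) (k : ℕ) (a : A k N),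
        (e N zz).1 (0, DirectSum.of (fun k' : ℕ => A k' N) k a) = zz.1.1 k a) ∧
      -- intertwining of the differentials
      (∀ (N : ℤ) (zz : ↥(holimDualSub A η G (N + 1)))
        (hm : dHolimDual A δ η G N zz.1 ∈ holimDualSub A η G N),
        ((e N ⟨dHolimDual A δ η G N zz.1, hm⟩ : ↥(homSet (hocolimGrp A N) G)) :
            hocolimGrp A N → G) =
          fun x => (e (N + 1) zz).1 (hocolimD A δ η N x)) :=
  holim_of_dual_tower_is_dual_of_hocolim_general A δ η hηchain
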